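/- arXiv:1703.07535 — 4 statements merged into one kernel-verified Lean document; each statement's English description precedes it below -/
import Mathlib

section
/- For nonzero positive semidefinite operators ρ and σ on ℂ^n, if the compression of σ to the support of ρ is positive definite (as an operator on supp ρ), then there exists a strictly positive (positive definite) operator R such that σ ≥ RρR in the Loewner order. -/
/-! Let `P` be the orthogonal projection onto `ker ρ` and take `R = t • (σ + P)`. A vector with
`σ x = 0` and `P x = 0` lies in `ran ρ ∩ ker σ`, which `ρ ≪ σ` forces to be `0`; hence `σ + P` is
positive definite. Since `ρ P = P ρ = 0`, `R ρ R = t² σ ρ σ`, and in any C⋆-algebra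
`σ ρ σ ≤ ‖ρ‖ σ² ≤ ‖ρ‖ ‖σ‖ σ`, so any small enough `t > 0` works. -/

open Matrix
open scoped ComplexOrder

/-- `μ ≪ ν`: the compression of `ν` to the support of `μ` is positive definite, i.e.
the quadratic form of `ν` is strictly positive on every nonzero vector of `supp μ = ran μ`. -/
def AbsCont {n : ℕ} (μ ν : Matrix (Fin n) (Fin n) ℂ) : Prop :=
  ∀ x ∈ LinearMap.range μ.mulVecLin, x ≠ 0 → 0 < (star x ⬝ᵥ ν.mulVec x).re

section CStarAlgebra

variable {A : Type*} [CStarAlgebra A] [PartialOrder A] [StarOrderedRing A]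

lemma CStarAlgebra.mul_self_le_norm_smul {a : A} (ha : 0 ≤ a) : a * a ≤ ‖a‖ • a := by
  obtain ⟨s, hs_nonneg, hs⟩ : ∃ s : A, 0 ≤ s ∧ s * s = a :=
    ⟨CFC.sqrt a, CFC.sqrt_nonneg a, CFC.sqrt_mul_sqrt_self a⟩
  calc a * a = star s * a * s := by rw [hs_nonneg.star_eq, ← hs]; simp only [mul_assoc]
    _ ≤ ‖a‖ • (star s * s) := CStarAlgebra.star_left_conjugate_le_norm_smul ha.isSelfAdjoint
    _ = ‖a‖ • a := by rw [hs_nonneg.star_eq, hs]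

lemma CStarAlgebra.conjugate_le_norm_mul_norm_smul {a b : A} (ha : 0 ≤ a)
    (hb : IsSelfAdjoint b) : a * b * a ≤ (‖b‖ * ‖a‖) • a :=
  calc a * b * a = star a * b * a := by rw [ha.star_eq]
    _ ≤ ‖b‖ • (star a * a) := star_left_conjugate_le_norm_smul hb
    _ ≤ ‖b‖ • (‖a‖ • a) := by
      rw [ha.star_eq]
      exact smul_le_smul_of_nonneg_left (mul_self_le_norm_smul ha) (norm_nonneg b)
    _ = (‖b‖ * ‖a‖) • a := smul_smul _ _ _

lemma CStarAlgebra.exists_pos_mul_self_smul_conjugate_le {a b : A} (ha : 0 ≤ a)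
    (hb : IsSelfAdjoint b) : ∃ t : ℝ, 0 < t ∧ (t * t) • (a * b * a) ≤ a := by
  set c := ‖b‖ * ‖a‖
  have hc : 0 ≤ c := by positivity
  have ht : (1 + c)⁻¹ * (1 + c)⁻¹ * c ≤ 1 := by
    rw [← mul_inv, inv_mul_le_one₀ (by positivity)]
    nlinarith
  refine ⟨(1 + c)⁻¹, by positivity, ?_⟩
  calc ((1 + c)⁻¹ * (1 + c)⁻¹) • (a * b * a) ≤ ((1 + c)⁻¹ * (1 + c)⁻¹) • (c • a) :=
        smul_le_smul_of_nonneg_left (conjugate_le_norm_mul_norm_smul ha hb) (by positivity)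
    _ = ((1 + c)⁻¹ * (1 + c)⁻¹ * c) • a := smul_smul _ _ _
    _ ≤ (1 : ℝ) • a := smul_le_smul_of_nonneg_right ht ha
    _ = a := one_smul ℝ a

end CStarAlgebra

namespace Matrix

open scoped MatrixOrder

variable {𝕜 : Type*} [RCLike 𝕜] {n : Type*} [Fintype n] [DecidableEq n]

/-- The orthogonal projection onto the kernel of a Hermitian matrix: since `0⁻¹ = 0`,
`1 - x * x⁻¹` is the indicator function of `{0}`. -/
noncomputable def kerProj (A : Matrix n n 𝕜) : Matrix n n 𝕜 := cfc (fun x : ℝ => 1 - x * x⁻¹) A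

lemma posSemidef_kerProj (A : Matrix n n 𝕜) : A.kerProj.PosSemidef := by
  refine nonneg_iff_posSemidef.mp (cfc_nonneg fun x _ => ?_)
  rcases eq_or_ne x 0 with rfl | hx <;> simp [*]

variable {A : Matrix n n 𝕜}

lemma mul_kerProj (hA : A.IsHermitian) : A * A.kerProj = 0 := by
  have hcont (f : ℝ → ℝ) : ContinuousOn f (spectrum ℝ A) := A.finite_real_spectrum.continuousOn f
  calc A * A.kerProj = cfc (fun x : ℝ => x * (1 - x * x⁻¹)) A := by
        rw [kerProj, cfc_mul (fun x => x) _ A (hcont _) (hcont _), cfc_id' ℝ A]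
    _ = cfc (0 : ℝ → ℝ) A := cfc_congr fun x _ => by
      rw [Pi.zero_apply, mul_sub, mul_one, ← mul_assoc, mul_self_mul_inv, sub_self]
    _ = 0 := cfc_zero ℝ A

lemma kerProj_mul (hA : A.IsHermitian) : A.kerProj * A = 0 := by
  simpa [hA.eq, (posSemidef_kerProj A).1.eq] using congrArg conjTranspose (mul_kerProj hA)

lemma mem_range_of_kerProj_mulVec_eq_zero (hA : A.IsHermitian) {x : n → 𝕜}
    (hx : A.kerProj *ᵥ x = 0) : x ∈ LinearMap.range A.mulVecLin := by
  have hcont (f : ℝ → ℝ) : ContinuousOn f (spectrum ℝ A) := A.finite_real_spectrum.continuousOn f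
  have hsplit : A * cfc (·⁻¹ : ℝ → ℝ) A = 1 - A.kerProj := by
    rw [kerProj, cfc_sub _ _ A (hcont _) (hcont _), cfc_const_one ℝ A, sub_sub_cancel,
      cfc_mul (fun x => x) _ A (hcont _) (hcont _), cfc_id' ℝ A]
  refine ⟨cfc (·⁻¹ : ℝ → ℝ) A *ᵥ x, ?_⟩
  rw [mulVecLin_apply, mulVec_mulVec, hsplit, sub_mulVec, one_mulVec, hx, sub_zero]

end Matrix

lemma AbsCont.posDef_add_kerProj {n : ℕ} {ρ σ : Matrix (Fin n) (Fin n) ℂ} (h : AbsCont ρ σ)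
    (hρ : ρ.IsHermitian) (hσ : σ.PosSemidef) : (σ + ρ.kerProj).PosDef := by
  have hP := posSemidef_kerProj ρ
  refine .of_dotProduct_mulVec_pos (hσ.add hP).1 fun x hx => ?_
  refine ((hσ.add hP).dotProduct_mulVec_nonneg x).lt_of_ne fun hzero => ?_
  rw [add_mulVec, dotProduct_add, eq_comm, add_eq_zero_iff_of_nonneg
    (hσ.dotProduct_mulVec_nonneg x) (hP.dotProduct_mulVec_nonneg x)] at hzero
  have hxρ := mem_range_of_kerProj_mulVec_eq_zero hρ ((hP.dotProduct_mulVec_zero_iff x).mp hzero.2)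
  simpa [hzero.1] using h x hxρ hx

open scoped MatrixOrder Matrix.Norms.L2Operator in
theorem exists_posDef_conj_le_of_absCont_general {n : ℕ}
    (ρ σ : Matrix (Fin n) (Fin n) ℂ)
    (hρ : ρ.PosSemidef) (hσ : σ.PosSemidef)
    (h : AbsCont ρ σ) :
    ∃ R : Matrix (Fin n) (Fin n) ℂ, R.PosDef ∧ (σ - R * ρ * R).PosSemidef := by
  obtain ⟨t, ht, hle⟩ := CStarAlgebra.exists_pos_mul_self_smul_conjugate_le
    (nonneg_iff_posSemidef.mpr hσ) hρ.1.isSelfAdjoint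
  refine ⟨t • (σ + ρ.kerProj), (h.posDef_add_kerProj hρ.1 hσ).smul ht, ?_⟩
  have hconj : (σ + ρ.kerProj) * ρ * (σ + ρ.kerProj) = σ * ρ * σ := by
    rw [add_mul, kerProj_mul hρ.1, add_zero, mul_add, mul_assoc σ ρ ρ.kerProj, mul_kerProj hρ.1, mul_zero,
      add_zero]
  rwa [← nonneg_iff_posSemidef, sub_nonneg, smul_mul_assoc, mul_smul_comm, smul_mul_assoc,
    smul_smul, hconj]

/-- If `ρ ≪ σ` then there is a positive definite `R` with `σ ≥ R ρ R` in the Loewner order. -/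
theorem exists_posDef_conj_le_of_absCont {n : ℕ}
    (ρ σ : Matrix (Fin n) (Fin n) ℂ)
    (hρ : ρ.PosSemidef) (hσ : σ.PosSemidef) (hρ0 : ρ ≠ 0) (hσ0 : σ ≠ 0)
    (h : AbsCont ρ σ) :
    ∃ R : Matrix (Fin n) (Fin n) ℂ, R.PosDef ∧ (σ - R * ρ * R).PosSemidef :=
  exists_posDef_conj_le_of_absCont_general ρ σ hρ hσ h
end

section
/- For nonzero positive semidefinite operators ρ and σ on ℂ^n, ρ ≪ σ (the compression of σ to supp ρ is positive definite) if and only if there exists a positive semidefinite operator R with ρ = RσR. -/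
/-!
Write `r = √ρ` and `S = r σ r`. If `ρ ≪ σ`, then `ker S = ker r`: for `S z = 0` the vector `r z`
lies in `supp ρ` and is killed by `σ`. Hence `r` is unchanged by the support projection
`S^{-1/2} S S^{-1/2}` of `S` (with `S^{-1/2}` the pseudo-inverse square root), and
`R = r S^{-1/2} r` satisfies `R σ R = r (S^{-1/2} S S^{-1/2}) r = r r = ρ`.
Conversely, if `x = R σ R y` and `σ x = 0`, then `(σ R σ) (R y) = 0`, so `R σ R y = 0`
because `R ≥ 0`.
-/

open Matrix
open scoped ComplexOrder

open scoped MatrixOrder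

namespace Matrix

variable {m n 𝕜 : Type*} [Fintype m] [Fintype n] [RCLike 𝕜]

theorem PosSemidef.mulVec_mulVec_eq_zero_of_conj_mulVec_eq_zero {A : Matrix n n 𝕜}
    (hA : A.PosSemidef) {B : Matrix n m 𝕜} {v : m → 𝕜} (h : (Bᴴ * A * B) *ᵥ v = 0) :
    A *ᵥ (B *ᵥ v) = 0 := by
  rw [← hA.dotProduct_mulVec_zero_iff, star_mulVec, ← dotProduct_mulVec, mulVec_mulVec,
    mulVec_mulVec, h, dotProduct_zero]

variable [DecidableEq m]

/-- Since `(√0)⁻¹ = 0`, this is the inverse of `√S` on the support of `S` and `0` on its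
kernel. -/
noncomputable def pinvSqrt (S : Matrix m m 𝕜) : Matrix m m 𝕜 :=
  cfc (fun t : ℝ => (√t)⁻¹) S

theorem continuousOn_real_spectrum (S : Matrix m m 𝕜) (f : ℝ → ℝ) :
    ContinuousOn f (spectrum ℝ S) :=
  S.finite_real_spectrum.continuousOn f

theorem posSemidef_pinvSqrt {S : Matrix m m 𝕜} : (pinvSqrt S).PosSemidef :=
  (cfc_nonneg fun t _ => inv_nonneg.2 (Real.sqrt_nonneg t)).posSemidef

theorem PosSemidef.mul_pinvSqrt_mul_self_mul_pinvSqrt {S : Matrix m m 𝕜} (hS : S.PosSemidef) :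
    S * (pinvSqrt S * S * pinvSqrt S) = S := by
  have hc := continuousOn_real_spectrum S
  calc S * (pinvSqrt S * S * pinvSqrt S)
      = cfc (fun t : ℝ => t * ((√t)⁻¹ * t * (√t)⁻¹)) S := by
        rw [pinvSqrt, cfc_mul _ _ _ (hc _) (hc _), cfc_mul _ _ _ (hc _) (hc _),
          cfc_mul _ _ _ (hc _) (hc _), cfc_id' ℝ S]
    _ = cfc (fun t : ℝ => t) S := cfc_congr fun t ht => by
        have ht0 : 0 ≤ t := spectrum_nonneg_of_nonneg hS.nonneg ht
        rcases ht0.eq_or_lt with rfl | htpos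
        · simp
        · field_simp
          rw [Real.sq_sqrt ht0]
    _ = S := cfc_id' ℝ S

theorem PosSemidef.sqrt_eq_mul_pinvSqrt {A : Matrix m m 𝕜} (hA : A.PosSemidef) :
    CFC.sqrt A = A * pinvSqrt A := by
  have hc := continuousOn_real_spectrum A
  rw [CFC.sqrt_eq_real_sqrt A hA.nonneg, cfcₙ_eq_cfc, pinvSqrt]
  conv_rhs => arg 1; rw [← cfc_id' ℝ A]
  rw [← cfc_mul _ _ _ (hc _) (hc _)]
  exact cfc_congr fun t _ => Real.div_sqrt.symm

theorem PosSemidef.range_sqrt_le {A : Matrix m m 𝕜} (hA : A.PosSemidef) :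
    LinearMap.range (CFC.sqrt A).mulVecLin ≤ LinearMap.range A.mulVecLin := by
  rw [hA.sqrt_eq_mul_pinvSqrt, mulVecLin_mul]
  exact LinearMap.range_comp_le_range _ _

end Matrix

section AbsCont

variable {n : ℕ} {ρ σ : Matrix (Fin n) (Fin n) ℂ}

theorem absCont_iff_disjoint_range_ker (hσ : σ.PosSemidef) :
    AbsCont ρ σ ↔ Disjoint (LinearMap.range ρ.mulVecLin) (LinearMap.ker σ.mulVecLin) := by
  rw [Submodule.disjoint_def]
  refine forall₂_congr fun x _ => ?_
  have hpos : 0 < (star x ⬝ᵥ σ *ᵥ x).re ↔ σ *ᵥ x ≠ 0 := by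
    obtain ⟨hre, him⟩ := Complex.nonneg_iff.1 (hσ.dotProduct_mulVec_nonneg x)
    rw [Ne, ← hσ.dotProduct_mulVec_zero_iff, Complex.ext_iff, ← him]
    simpa only [Complex.zero_re, Complex.zero_im, and_true] using hre.lt_iff_ne'
  rw [LinearMap.mem_ker, mulVecLin_apply, hpos, Ne, Ne, not_imp_not]

theorem absCont_conj {R : Matrix (Fin n) (Fin n) ℂ} (hR : R.PosSemidef) (hσ : σ.PosSemidef) :
    AbsCont (R * σ * R) σ := by
  rw [absCont_iff_disjoint_range_ker hσ, Submodule.disjoint_def]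
  rintro _ ⟨y, rfl⟩ hx
  rw [LinearMap.mem_ker, mulVecLin_apply, mulVecLin_apply] at hx
  rw [mulVecLin_apply, ← mulVec_mulVec, ← mulVec_mulVec]
  refine hR.mulVec_mulVec_eq_zero_of_conj_mulVec_eq_zero ?_
  simpa only [hσ.1.eq, mulVec_mulVec, mul_assoc] using hx

theorem exists_posSemidef_conj_eq_of_absCont (hρ : ρ.PosSemidef) (hσ : σ.PosSemidef)
    (h : AbsCont ρ σ) : ∃ R : Matrix (Fin n) (Fin n) ℂ, R.PosSemidef ∧ ρ = R * σ * R := by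
  set r := CFC.sqrt ρ
  have hr : r.IsHermitian := (CFC.sqrt_nonneg ρ).posSemidef.1
  set S := r * σ * r
  have hS : S.PosSemidef := by simpa only [hr.eq] using hσ.conjTranspose_mul_mul_same r
  set T := pinvSqrt S
  have hker : ∀ z, S *ᵥ z = 0 → r *ᵥ z = 0 := fun z hz =>
    Submodule.disjoint_def.1 ((absCont_iff_disjoint_range_ker hσ).1 h) _
      (hρ.range_sqrt_le ⟨z, rfl⟩)
      (hσ.mulVec_mulVec_eq_zero_of_conj_mulVec_eq_zero (by rwa [hr.eq]))
  have hrP : r * (T * S * T) = r := by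
    have hSQ : S * (1 - T * S * T) = 0 := by
      rw [mul_sub, mul_one, hS.mul_pinvSqrt_mul_self_mul_pinvSqrt, sub_self]
    have hrQ : r * (1 - T * S * T) = 0 := ext_iff_mulVec.2 fun v => by
      rw [← mulVec_mulVec, hker _ (by rw [mulVec_mulVec, hSQ, zero_mulVec]), zero_mulVec]
    rwa [mul_sub, mul_one, sub_eq_zero, eq_comm] at hrQ
  refine ⟨r * T * r, by simpa only [hr.eq] using posSemidef_pinvSqrt.conjTranspose_mul_mul_same r,
    ?_⟩
  calc ρ = r * r := (CFC.sqrt_mul_sqrt_self ρ hρ.nonneg).symm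
    _ = r * (T * S * T) * r := by rw [hrP]
    _ = r * T * r * σ * (r * T * r) := by simp only [S, mul_assoc]

end AbsCont

theorem absCont_iff_exists_posSemidef_conj_general {n : ℕ}
    (ρ σ : Matrix (Fin n) (Fin n) ℂ)
    (hρ : ρ.PosSemidef) (hσ : σ.PosSemidef) :
    AbsCont ρ σ ↔
      ∃ R : Matrix (Fin n) (Fin n) ℂ, R.PosSemidef ∧ ρ = R * σ * R :=
  ⟨exists_posSemidef_conj_eq_of_absCont hρ hσ, fun ⟨_, hR, hρR⟩ => hρR ▸ absCont_conj hR hσ⟩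

/-- `ρ ≪ σ` iff there exists a positive semidefinite `R` with `ρ = R σ R`. -/
theorem absCont_iff_exists_posSemidef_conj {n : ℕ}
    (ρ σ : Matrix (Fin n) (Fin n) ℂ)
    (hρ : ρ.PosSemidef) (hσ : σ.PosSemidef) (hρ0 : ρ ≠ 0) (hσ0 : σ ≠ 0) :
    AbsCont ρ σ ↔
      ∃ R : Matrix (Fin n) (Fin n) ℂ, R.PosSemidef ∧ ρ = R * σ * R :=
  absCont_iff_exists_posSemidef_conj_general ρ σ hρ hσ
end

section
/- For positive definite matrices A and B, the operator geometric mean A # B := √A √(√A⁻¹ B √A⁻¹) √A is the unique positive definite solution X of the equation B = X A⁻¹ X. -/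
/-!
Put `S = √A`. The substitution `X = S Y S` preserves positive definiteness and turns
`X A⁻¹ X = B` into `Y² = S⁻¹ B S⁻¹`. By uniqueness of positive square roots its only positive
definite solution is `Y = √(S⁻¹ B S⁻¹)`, i.e. `X = A # B`.
-/

open Matrix
open scoped ComplexOrder

/-- The positive semidefinite square root of a positive semidefinite matrix
(junk value `0` on non-positive-semidefinite input). -/
noncomputable def msqrt {n : ℕ} (A : Matrix (Fin n) (Fin n) ℂ) : Matrix (Fin n) (Fin n) ℂ :=
  letI := Classical.propDecidable A.PosSemidef
  if h : A.PosSemidef then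
    (h.1.eigenvectorUnitary : Matrix (Fin n) (Fin n) ℂ) *
      diagonal ((↑) ∘ (√·) ∘ h.1.eigenvalues) *
      (star h.1.eigenvectorUnitary : Matrix (Fin n) (Fin n) ℂ)
  else 0

/-- The operator geometric mean `A # B = √A √(√A⁻¹ B √A⁻¹) √A`. -/
noncomputable def geomMean {n : ℕ} (A B : Matrix (Fin n) (Fin n) ℂ) :
    Matrix (Fin n) (Fin n) ℂ :=
  msqrt A * msqrt (msqrt A⁻¹ * B * msqrt A⁻¹) * msqrt A

open MatrixOrder

section Congruence

variable {m R : Type*} [Fintype m] [DecidableEq m] [CommRing R] {S : Matrix m m R}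

lemma Matrix.mul_inv_mul_inv_mul_cancel (hS : IsUnit S) (X : Matrix m m R) :
    S * (S⁻¹ * X * S⁻¹) * S = X := by
  have hS' := (isUnit_iff_isUnit_det S).mp hS
  simp only [Matrix.mul_assoc, nonsing_inv_mul S hS', Matrix.mul_one,
    mul_nonsing_inv_cancel_left S _ hS']

lemma Matrix.inv_mul_mul_mul_inv_cancel (hS : IsUnit S) (X : Matrix m m R) :
    S⁻¹ * (S * X * S) * S⁻¹ = X := by
  have hS' := (isUnit_iff_isUnit_det S).mp hS
  simp only [Matrix.mul_assoc, mul_nonsing_inv S hS', Matrix.mul_one,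
    nonsing_inv_mul_cancel_left S _ hS']

lemma Matrix.conj_mul_inv_mul_self_mul_conj (hS : IsUnit S) (Y Z : Matrix m m R) :
    S * Y * S * (S * S)⁻¹ * (S * Z * S) = S * (Y * Z) * S := by
  have hS' := (isUnit_iff_isUnit_det S).mp hS
  rw [Matrix.mul_inv_rev]
  simp only [Matrix.mul_assoc, nonsing_inv_mul_cancel_left S _ hS',
    mul_nonsing_inv_cancel_left S _ hS']

end Congruence

lemma Matrix.IsHermitian.posDef_conj_iff {m R : Type*} [Fintype m] [DecidableEq m] [Ring R]
    [PartialOrder R] [StarRing R] {S X : Matrix m m R} (hS : S.IsHermitian) (hSu : IsUnit S) :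
    (S * X * S).PosDef ↔ X.PosDef := by
  have := hSu.posDef_star_left_conjugate_iff (x := X)
  rwa [star_eq_conjTranspose, hS.eq] at this

section Sqrt

variable {n : ℕ} {A : Matrix (Fin n) (Fin n) ℂ}

lemma msqrt_eq_sqrt (hA : A.PosSemidef) : msqrt A = CFC.sqrt A := by
  rw [msqrt, dif_pos hA, CFC.sqrt_eq_real_sqrt A hA.nonneg, cfcₙ_eq_cfc, hA.1.cfc_eq]
  rfl

lemma Matrix.PosDef.msqrt (hA : A.PosDef) : (msqrt A).PosDef :=
  msqrt_eq_sqrt hA.posSemidef ▸ (IsStrictlyPositive.sqrt A hA.isStrictlyPositive).posDef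

lemma msqrt_mul_self (hA : A.PosSemidef) : msqrt A * msqrt A = A :=
  msqrt_eq_sqrt hA ▸ CFC.sqrt_mul_sqrt_self A hA.nonneg

lemma msqrt_inv (hA : A.PosSemidef) : msqrt A⁻¹ = (msqrt A)⁻¹ := by
  rw [msqrt_eq_sqrt hA, msqrt_eq_sqrt hA.inv, hA.inv_sqrt]

lemma eq_msqrt_of_mul_self_eq {X : Matrix (Fin n) (Fin n) ℂ} (hX : X.PosSemidef)
    (h : X * X = A) : X = msqrt A := by
  have hA : A.PosSemidef := by
    simpa [hX.1.eq, h] using posSemidef_conjTranspose_mul_self X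
  rw [msqrt_eq_sqrt hA, CFC.sqrt_unique h hX.nonneg]

end Sqrt

/-- For positive definite `A, B`, the geometric mean `A # B` is the unique positive
definite solution `X` of `B = X A⁻¹ X`. -/
theorem geomMean_unique_solution {n : ℕ}
    (A B : Matrix (Fin n) (Fin n) ℂ) (hA : A.PosDef) (hB : B.PosDef) :
    (geomMean A B).PosDef ∧ B = geomMean A B * A⁻¹ * geomMean A B ∧
      ∀ X : Matrix (Fin n) (Fin n) ℂ, X.PosDef → B = X * A⁻¹ * X → X = geomMean A B := by
  set S := msqrt A
  set C := S⁻¹ * B * S⁻¹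
  have hS : S.PosDef := hA.msqrt
  have hSu : IsUnit S := hS.isUnit
  have hSinv : S⁻¹.IsHermitian := hS.1.inv
  have hSinvu : IsUnit S⁻¹ := isUnit_nonsing_inv_iff.mpr hSu
  have hA_eq : A = S * S := (msqrt_mul_self hA.posSemidef).symm
  have hB_eq : B = S * C * S := (mul_inv_mul_inv_mul_cancel hSu B).symm
  have hC : C.PosDef := (hSinv.posDef_conj_iff hSinvu).mpr hB
  have hG : geomMean A B = S * msqrt C * S := by rw [geomMean, msqrt_inv hA.posSemidef]
  refine ⟨?_, ?_, fun X hX hXB => ?_⟩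
  · rw [hG, hS.1.posDef_conj_iff hSu]
    exact hC.msqrt
  · rw [hG, hA_eq, conj_mul_inv_mul_self_mul_conj hSu, msqrt_mul_self hC.posSemidef, ← hB_eq]
  · set Y := S⁻¹ * X * S⁻¹
    have hXY : X = S * Y * S := (mul_inv_mul_inv_mul_cancel hSu X).symm
    have hY : Y.PosDef := (hSinv.posDef_conj_iff hSinvu).mpr hX
    have hYY : Y * Y = C := by
      rw [show C = S⁻¹ * B * S⁻¹ from rfl, hXB, hXY, hA_eq, conj_mul_inv_mul_self_mul_conj hSu,
        inv_mul_mul_mul_inv_cancel hSu]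
    rw [hG, hXY, eq_msqrt_of_mul_self_eq hY.posSemidef hYY]
end

section
/- Uniqueness of the quantum Lebesgue decomposition: suppose ρ ≪ σ, and σ = τ₁ + τ₁' = τ₂ + τ₂' are two decompositions of σ into positive semidefinite parts with τ₁ ≪ ρ, τ₂ ≪ ρ, and τ₁' ⊥ ρ, τ₂' ⊥ ρ. Then τ₁ = τ₂ and τ₁' = τ₂'. -/
/-!
For positive semidefinite `τ'` and `ρ`, `Tr (τ' ρ) = 0` forces `ρ τ' = 0`, so both
decompositions give `ρ τ₁ = ρ σ = ρ τ₂`. For a Hermitian `τ ≪ ρ`, a vector in the range of `τ`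
that is killed by `ρ` must vanish, so `ker τ = ker (ρ τ)`; hence `τ₁` and `τ₂` have the same
kernel and, being Hermitian, the same range. Then `(τ₁ - τ₂) x` lies in the range of `τ₁` and
is killed by `ρ`, so it is zero.
-/

open Matrix
open scoped ComplexOrder

/-- `μ ⊥ ν`: `Tr (μ ν) = 0`. -/
def MutSing {n : ℕ} (μ ν : Matrix (Fin n) (Fin n) ℂ) : Prop := (μ * ν).trace = 0

namespace Matrix

variable {𝕜 ι : Type*} [RCLike 𝕜] [Fintype ι] [DecidableEq ι]

open scoped MatrixOrder in
theorem PosSemidef.mul_eq_zero_of_trace_mul_eq_zero {A B : Matrix ι ι 𝕜}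
    (hA : A.PosSemidef) (hB : B.PosSemidef) (h : (A * B).trace = 0) : A * B = 0 := by
  obtain ⟨S, rfl⟩ := CStarAlgebra.nonneg_iff_eq_star_mul_self.mp hA.nonneg
  obtain ⟨R, rfl⟩ := CStarAlgebra.nonneg_iff_eq_star_mul_self.mp hB.nonneg
  simp only [star_eq_conjTranspose] at h ⊢
  -- `Tr ((Sᴴ S) (Rᴴ R)) = Tr ((S Rᴴ)ᴴ (S Rᴴ))`
  have hSR : S * Rᴴ = 0 := by
    rw [← trace_conjTranspose_mul_self_eq_zero_iff, ← h, conjTranspose_mul,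
      conjTranspose_conjTranspose, Matrix.mul_assoc, trace_mul_comm]
    simp only [Matrix.mul_assoc]
  rw [Matrix.mul_assoc, ← Matrix.mul_assoc S, hSR, Matrix.zero_mul, Matrix.mul_zero]

theorem IsHermitian.range_mulVecLin_le_of_ker_le {A B : Matrix ι ι 𝕜}
    (hA : A.IsHermitian) (hB : B.IsHermitian)
    (h : LinearMap.ker A.mulVecLin ≤ LinearMap.ker B.mulVecLin) :
    LinearMap.range B.mulVecLin ≤ LinearMap.range A.mulVecLin := by
  have hker : LinearMap.ker A.toEuclideanLin ≤ LinearMap.ker B.toEuclideanLin := by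
    intro x hx
    rw [LinearMap.mem_ker, ← WithLp.ofLp_eq_zero, ofLp_toLpLin] at hx ⊢
    exact h hx
  have hrange : LinearMap.range B.toEuclideanLin ≤ LinearMap.range A.toEuclideanLin := by
    rw [← Submodule.orthogonal_orthogonal (LinearMap.range B.toEuclideanLin),
      ← Submodule.orthogonal_orthogonal (LinearMap.range A.toEuclideanLin),
      (isSymmetric_toEuclideanLin_iff.mpr hA).orthogonal_range,
      (isSymmetric_toEuclideanLin_iff.mpr hB).orthogonal_range]
    exact Submodule.orthogonal_le hker
  rintro _ ⟨y, rfl⟩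
  obtain ⟨z, hz⟩ := hrange ⟨WithLp.toLp 2 y, rfl⟩
  exact ⟨z.ofLp, congrArg WithLp.ofLp hz⟩

end Matrix

section Lebesgue

variable {n : ℕ} {ρ τ τ₁ τ₂ μ ν : Matrix (Fin n) (Fin n) ℂ}

theorem AbsCont.eq_zero_of_mulVec_eq_zero (hac : AbsCont τ ρ) {x : Fin n → ℂ}
    (hx : x ∈ LinearMap.range τ.mulVecLin) (hρx : ρ *ᵥ x = 0) : x = 0 := by
  by_contra hne
  simpa [hρx] using hac x hx hne

theorem AbsCont.mulVec_eq_zero_iff (hac : AbsCont τ ρ) {x : Fin n → ℂ} :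
    τ *ᵥ x = 0 ↔ (ρ * τ) *ᵥ x = 0 := by
  rw [← mulVec_mulVec]
  exact ⟨fun h ↦ by rw [h, mulVec_zero],
    hac.eq_zero_of_mulVec_eq_zero (LinearMap.mem_range_self τ.mulVecLin x)⟩

theorem AbsCont.eq_of_mul_eq (h₁ : τ₁.IsHermitian) (h₂ : τ₂.IsHermitian)
    (hac₁ : AbsCont τ₁ ρ) (hac₂ : AbsCont τ₂ ρ) (h : ρ * τ₁ = ρ * τ₂) : τ₁ = τ₂ := by
  have hker : LinearMap.ker τ₁.mulVecLin ≤ LinearMap.ker τ₂.mulVecLin := fun x hx ↦ by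
    rw [LinearMap.mem_ker, mulVecLin_apply] at hx ⊢
    rwa [hac₂.mulVec_eq_zero_iff, ← h, ← hac₁.mulVec_eq_zero_iff]
  have hrange := h₁.range_mulVecLin_le_of_ker_le h₂ hker
  rw [ext_iff_mulVec]
  intro x
  have hmem : (τ₁ - τ₂) *ᵥ x ∈ LinearMap.range τ₁.mulVecLin := by
    rw [sub_mulVec]
    exact Submodule.sub_mem _ (LinearMap.mem_range_self τ₁.mulVecLin x)
      (hrange (LinearMap.mem_range_self τ₂.mulVecLin x))
  have hρ : ρ *ᵥ ((τ₁ - τ₂) *ᵥ x) = 0 := by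
    rw [mulVec_mulVec, Matrix.mul_sub, h, sub_self, zero_mulVec]
  rw [← sub_eq_zero, ← sub_mulVec]
  exact hac₁.eq_zero_of_mulVec_eq_zero hmem hρ

theorem MutSing.symm (h : MutSing μ ν) : MutSing ν μ := by
  rwa [MutSing, trace_mul_comm]

theorem MutSing.mul_eq_zero (h : MutSing μ ν) (hμ : μ.PosSemidef) (hν : ν.PosSemidef) :
    μ * ν = 0 :=
  hμ.mul_eq_zero_of_trace_mul_eq_zero hν h

end Lebesgue

theorem lebesgue_decomposition_unique_general {n : ℕ}
    (ρ σ τ₁ τ₁' τ₂ τ₂' : Matrix (Fin n) (Fin n) ℂ)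
    (hρ : ρ.PosSemidef)
    (hτ₁ : τ₁.PosSemidef) (hτ₁' : τ₁'.PosSemidef)
    (hτ₂ : τ₂.PosSemidef) (hτ₂' : τ₂'.PosSemidef)
    (hdec₁ : σ = τ₁ + τ₁') (hdec₂ : σ = τ₂ + τ₂')
    (hac₁ : AbsCont τ₁ ρ) (hac₂ : AbsCont τ₂ ρ)
    (hsing₁ : MutSing τ₁' ρ) (hsing₂ : MutSing τ₂' ρ) :
    τ₁ = τ₂ ∧ τ₁' = τ₂' := by
  have hρτ₁' : ρ * τ₁' = 0 := hsing₁.symm.mul_eq_zero hρ hτ₁'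
  have hρτ₂' : ρ * τ₂' = 0 := hsing₂.symm.mul_eq_zero hρ hτ₂'
  have hmul : ρ * τ₁ = ρ * τ₂ := by
    calc ρ * τ₁ = ρ * (τ₁ + τ₁') := by rw [Matrix.mul_add, hρτ₁', add_zero]
      _ = ρ * (τ₂ + τ₂') := by rw [← hdec₁, ← hdec₂]
      _ = ρ * τ₂ := by rw [Matrix.mul_add, hρτ₂', add_zero]
  have hτ : τ₁ = τ₂ := hac₁.eq_of_mul_eq hτ₁.isHermitian hτ₂.isHermitian hac₂ hmul
  subst hτ
  exact ⟨rfl, add_left_cancel (hdec₁.symm.trans hdec₂)⟩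

/-- Uniqueness of the quantum Lebesgue decomposition when `ρ ≪ σ`. -/
theorem lebesgue_decomposition_unique {n : ℕ}
    (ρ σ τ₁ τ₁' τ₂ τ₂' : Matrix (Fin n) (Fin n) ℂ)
    (hρ : ρ.PosSemidef) (hσ : σ.PosSemidef) (hρ0 : ρ ≠ 0) (hσ0 : σ ≠ 0)
    (hAC : AbsCont ρ σ)
    (hτ₁ : τ₁.PosSemidef) (hτ₁' : τ₁'.PosSemidef)
    (hτ₂ : τ₂.PosSemidef) (hτ₂' : τ₂'.PosSemidef)
    (hdec₁ : σ = τ₁ + τ₁') (hdec₂ : σ = τ₂ + τ₂')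
    (hac₁ : AbsCont τ₁ ρ) (hac₂ : AbsCont τ₂ ρ)
    (hsing₁ : MutSing τ₁' ρ) (hsing₂ : MutSing τ₂' ρ) :
    τ₁ = τ₂ ∧ τ₁' = τ₂' :=
  lebesgue_decomposition_unique_general ρ σ τ₁ τ₁' τ₂ τ₂' hρ hτ₁ hτ₁' hτ₂ hτ₂' hdec₁ hdec₂ hac₁ hac₂
    hsing₁ hsing₂
end
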